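/- Let σ₀ ≥ 0 and μ > 0. Then ∫_{|σ|≤μ} ∫_{−B_μ} |σ|^{−1+2σ₀} χ_{B_μ}(−ζ) χ_{B_μ}(σ−ζ) χ_{B_μ}(ξ−σ) dζ dσ ≳ μ^{3+2σ₀} uniformly for ξ in a box of side ∼ μ around (2λ, 0), where B_μ = {ξ : |ξ₁ − λ| ≤ μ, |ξ₂| ≤ μ} and −B_μ is its reflection; here σ₀ ∈ {0, 1/2}. -/

import Mathlib

open MeasureTheory
open scoped ENNReal

noncomputable section

abbrev E2 := EuclideanSpace ℝ (Fin 2)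

/-- The box B_μ = {ξ : |ξ₁ − λ| ≤ μ, |ξ₂| ≤ μ}. -/
def boxB (lam μ : ℝ) : Set E2 := {ξ | |ξ 0 - lam| ≤ μ ∧ |ξ 1| ≤ μ}

/-- A coordinate box in `E2`. -/
def boxI (a b : Fin 2 → ℝ) : Set E2 := {x | ∀ i, x i ∈ Set.Icc (a i) (b i)}

lemma boxI_eq_preimage (a b : Fin 2 → ℝ) :
    boxI a b = (MeasurableEquiv.toLp 2 (Fin 2 → ℝ)).symm ⁻¹'
      (Set.univ.pi fun i => Set.Icc (a i) (b i)) := by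
  ext x
  simp [boxI, Set.mem_pi, MeasurableEquiv.coe_toLp_symm, Pi.le_def, forall_and]

lemma measurableSet_boxI (a b : Fin 2 → ℝ) : MeasurableSet (boxI a b) := by
  rw [boxI_eq_preimage]
  exact (MeasurableEquiv.toLp 2 (Fin 2 → ℝ)).symm.measurable
    (MeasurableSet.univ_pi fun i => measurableSet_Icc)

lemma volume_boxI (a b : Fin 2 → ℝ) :
    volume (boxI a b) = ENNReal.ofReal (b 0 - a 0) * ENNReal.ofReal (b 1 - a 1) := by
  rw [boxI_eq_preimage,
    (EuclideanSpace.volume_preserving_symm_measurableEquiv_toLp (Fin 2)).measure_preimage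
      (MeasurableSet.univ_pi fun i => measurableSet_Icc).nullMeasurableSet,
    volume_pi_pi]
  simp [Fin.prod_univ_two, Real.volume_Icc]

/-- Volume lower bound in the ill-posedness proof: the trilinear frequency integral is
≳ μ^{3+2σ₀}, uniformly for ξ in a box of side ∼ μ around the center of interaction. -/
theorem trilinear_volume_lower_bound (σ0 : ℝ) (hσ : σ0 = 0 ∨ σ0 = 1/2) :
    ∃ c > 0, ∀ lam μ : ℝ, 1 ≤ lam → 0 < μ → μ ≤ lam →
      ∀ ξ : E2, |ξ 0 - lam| ≤ μ / 2 → |ξ 1| ≤ μ / 2 →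
      ENNReal.ofReal (c * μ ^ (3 + 2 * σ0)) ≤
        ∫⁻ σ in Metric.closedBall (0 : E2) μ, ∫⁻ ζ : E2,
          ENNReal.ofReal (‖σ‖ ^ (-1 + 2 * σ0)) *
          Set.indicator (boxB lam μ) (fun _ => (1 : ℝ≥0∞)) (-ζ) *
          Set.indicator (boxB lam μ) (fun _ => (1 : ℝ≥0∞)) (σ - ζ) *
          Set.indicator (boxB lam μ) (fun _ => (1 : ℝ≥0∞)) (ξ - σ) := by
  refine ⟨1/16, by norm_num, ?_⟩
  intro lam μ hlam hμ hμlam ξ hξ0 hξ1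
  set e : ℝ := -1 + 2 * σ0 with he
  have he0 : e ≤ 0 := by rcases hσ with h | h <;> simp [he, h]
  -- the σ-box and ζ-box
  set S : Set E2 := boxI ![μ/4, 0] ![μ/2, μ/4] with hS
  set Z : Set E2 := boxI ![-lam - μ/2, -μ/2] ![-lam + μ/2, μ/2] with hZ
  have hSvol : volume S = ENNReal.ofReal (μ/4) * ENNReal.ofReal (μ/4) := by
    rw [hS, volume_boxI]; norm_num
    rw [show μ/2 - μ/4 = μ/4 by ring]
  have hZvol : volume Z = ENNReal.ofReal μ * ENNReal.ofReal μ := by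
    rw [hZ, volume_boxI]; norm_num
    rw [show μ/2 - -μ/2 = μ by ring]
  -- membership facts for σ ∈ S
  have hSmem : ∀ σ ∈ S, σ 0 ∈ Set.Icc (μ/4) (μ/2) ∧ σ 1 ∈ Set.Icc 0 (μ/4) := by
    intro σ hσS
    refine ⟨?_, ?_⟩
    · have := hσS 0; simpa using this
    · have := hσS 1; simpa using this
  have hnormS : ∀ σ ∈ S, μ/4 ≤ ‖σ‖ ∧ ‖σ‖ ≤ μ := by
    intro σ hσS
    obtain ⟨⟨h00, h01⟩, h10, h11⟩ := hSmem σ hσS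
    have hnorm : ‖σ‖ = Real.sqrt ((σ 0)^2 + (σ 1)^2) := by
      rw [EuclideanSpace.norm_eq, Fin.sum_univ_two]
      norm_num [sq_abs]
    constructor
    · rw [hnorm]
      calc μ/4 ≤ σ 0 := h00
        _ = Real.sqrt ((σ 0)^2) := by
            rw [Real.sqrt_sq (le_trans (by positivity) h00)]
        _ ≤ Real.sqrt ((σ 0)^2 + (σ 1)^2) := by
            apply Real.sqrt_le_sqrt; nlinarith
    · rw [hnorm]
      calc Real.sqrt ((σ 0)^2 + (σ 1)^2) ≤ Real.sqrt (μ^2) := by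
            apply Real.sqrt_le_sqrt; nlinarith
        _ = μ := Real.sqrt_sq hμ.le
  have hSsub : S ⊆ Metric.closedBall (0 : E2) μ := by
    intro σ hσS
    rw [Metric.mem_closedBall, dist_zero_right]
    exact (hnormS σ hσS).2
  -- pointwise indicator facts
  have hkey : ∀ σ ∈ S, ∀ ζ ∈ Z,
      ENNReal.ofReal (μ ^ e) ≤
        ENNReal.ofReal (‖σ‖ ^ e) *
        Set.indicator (boxB lam μ) (fun _ => (1 : ℝ≥0∞)) (-ζ) *
        Set.indicator (boxB lam μ) (fun _ => (1 : ℝ≥0∞)) (σ - ζ) *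
        Set.indicator (boxB lam μ) (fun _ => (1 : ℝ≥0∞)) (ξ - σ) := by
    intro σ hσS ζ hζZ
    obtain ⟨⟨h00, h01⟩, h10, h11⟩ := hSmem σ hσS
    have hz0 : ζ 0 ∈ Set.Icc (-lam - μ/2) (-lam + μ/2) := by have := hζZ 0; simpa using this
    have hz1 : ζ 1 ∈ Set.Icc (-μ/2) (μ/2) := by have := hζZ 1; simpa using this
    obtain ⟨hz00, hz01⟩ := hz0
    obtain ⟨hz10, hz11⟩ := hz1
    have hξ0' := abs_le.1 hξ0
    have hξ1' := abs_le.1 hξ1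
    have i1 : (-ζ) ∈ boxB lam μ := by
      constructor
      · show |(-ζ) 0 - lam| ≤ μ
        have : (-ζ) 0 = -(ζ 0) := rfl
        rw [this, abs_le]; constructor <;> linarith
      · show |(-ζ) 1| ≤ μ
        have : (-ζ) 1 = -(ζ 1) := rfl
        rw [this, abs_le]; constructor <;> linarith
    have i2 : (σ - ζ) ∈ boxB lam μ := by
      constructor
      · show |(σ - ζ) 0 - lam| ≤ μ
        have : (σ - ζ) 0 = σ 0 - ζ 0 := rfl
        rw [this, abs_le]; constructor <;> linarith
      · show |(σ - ζ) 1| ≤ μ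
        have : (σ - ζ) 1 = σ 1 - ζ 1 := rfl
        rw [this, abs_le]; constructor <;> linarith
    have i3 : (ξ - σ) ∈ boxB lam μ := by
      constructor
      · show |(ξ - σ) 0 - lam| ≤ μ
        have : (ξ - σ) 0 = ξ 0 - σ 0 := rfl
        rw [this, abs_le]; constructor <;> linarith
      · show |(ξ - σ) 1| ≤ μ
        have : (ξ - σ) 1 = ξ 1 - σ 1 := rfl
        rw [this, abs_le]; constructor <;> linarith
    rw [Set.indicator_of_mem i1, Set.indicator_of_mem i2, Set.indicator_of_mem i3,
      mul_one, mul_one, mul_one]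
    apply ENNReal.ofReal_le_ofReal
    exact Real.rpow_le_rpow_of_nonpos (lt_of_lt_of_le (by positivity) (hnormS σ hσS).1) (hnormS σ hσS).2 he0
  -- lower bound the inner integral for each σ ∈ S
  have hinner : ∀ σ ∈ S,
      ENNReal.ofReal (μ ^ e) * (ENNReal.ofReal μ * ENNReal.ofReal μ) ≤
        ∫⁻ ζ : E2,
          ENNReal.ofReal (‖σ‖ ^ e) *
          Set.indicator (boxB lam μ) (fun _ => (1 : ℝ≥0∞)) (-ζ) *
          Set.indicator (boxB lam μ) (fun _ => (1 : ℝ≥0∞)) (σ - ζ) *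
          Set.indicator (boxB lam μ) (fun _ => (1 : ℝ≥0∞)) (ξ - σ) := by
    intro σ hσS
    calc ENNReal.ofReal (μ ^ e) * (ENNReal.ofReal μ * ENNReal.ofReal μ)
        = ENNReal.ofReal (μ ^ e) * volume Z := by rw [hZvol]
      _ = ∫⁻ _ in Z, ENNReal.ofReal (μ ^ e) := (setLIntegral_const Z _).symm
      _ ≤ ∫⁻ ζ in Z,
          ENNReal.ofReal (‖σ‖ ^ e) *
          Set.indicator (boxB lam μ) (fun _ => (1 : ℝ≥0∞)) (-ζ) *
          Set.indicator (boxB lam μ) (fun _ => (1 : ℝ≥0∞)) (σ - ζ) *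
          Set.indicator (boxB lam μ) (fun _ => (1 : ℝ≥0∞)) (ξ - σ) := by
          apply setLIntegral_mono' (measurableSet_boxI _ _)
          intro ζ hζZ
          exact hkey σ hσS ζ hζZ
      _ ≤ _ := setLIntegral_le_lintegral _ _
  -- assemble
  have hmain : ENNReal.ofReal (μ ^ e) * (ENNReal.ofReal μ * ENNReal.ofReal μ) *
      (ENNReal.ofReal (μ/4) * ENNReal.ofReal (μ/4)) ≤
      ∫⁻ σ in Metric.closedBall (0 : E2) μ, ∫⁻ ζ : E2,
          ENNReal.ofReal (‖σ‖ ^ (-1 + 2 * σ0)) *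
          Set.indicator (boxB lam μ) (fun _ => (1 : ℝ≥0∞)) (-ζ) *
          Set.indicator (boxB lam μ) (fun _ => (1 : ℝ≥0∞)) (σ - ζ) *
          Set.indicator (boxB lam μ) (fun _ => (1 : ℝ≥0∞)) (ξ - σ) := by
    calc ENNReal.ofReal (μ ^ e) * (ENNReal.ofReal μ * ENNReal.ofReal μ) *
        (ENNReal.ofReal (μ/4) * ENNReal.ofReal (μ/4))
        = ENNReal.ofReal (μ ^ e) * (ENNReal.ofReal μ * ENNReal.ofReal μ) * volume S := by
          rw [hSvol]
      _ = ∫⁻ _ in S, ENNReal.ofReal (μ ^ e) * (ENNReal.ofReal μ * ENNReal.ofReal μ) :=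
          (setLIntegral_const S _).symm
      _ ≤ ∫⁻ σ in S, ∫⁻ ζ : E2,
          ENNReal.ofReal (‖σ‖ ^ (-1 + 2 * σ0)) *
          Set.indicator (boxB lam μ) (fun _ => (1 : ℝ≥0∞)) (-ζ) *
          Set.indicator (boxB lam μ) (fun _ => (1 : ℝ≥0∞)) (σ - ζ) *
          Set.indicator (boxB lam μ) (fun _ => (1 : ℝ≥0∞)) (ξ - σ) := by
          apply setLIntegral_mono' (measurableSet_boxI _ _)
          intro σ hσS
          exact hinner σ hσS
      _ ≤ _ := lintegral_mono_set hSsub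
  refine le_trans ?_ hmain
  have h1 : ENNReal.ofReal (μ ^ e) * (ENNReal.ofReal μ * ENNReal.ofReal μ) *
      (ENNReal.ofReal (μ/4) * ENNReal.ofReal (μ/4)) =
      ENNReal.ofReal (μ ^ e * (μ * μ) * (μ/4 * (μ/4))) := by
    rw [ENNReal.ofReal_mul (by positivity), ENNReal.ofReal_mul (by positivity),
      ENNReal.ofReal_mul (by positivity), ENNReal.ofReal_mul (by positivity)]
  rw [h1]
  apply ENNReal.ofReal_le_ofReal
  have h2 : μ ^ e * μ ^ (4:ℝ) = μ ^ (3 + 2 * σ0) := by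
    rw [← Real.rpow_add hμ]
    congr 1
    rw [he]; ring
  have h3 : μ ^ (4:ℝ) = μ * μ * (μ * μ) := by
    rw [show (4:ℝ) = ((4:ℕ):ℝ) by norm_num, Real.rpow_natCast]
    ring
  have h4 : μ ^ e * (μ * μ) * (μ/4 * (μ/4)) = μ ^ (3 + 2 * σ0) / 16 := by
    rw [← h2, h3]; ring
  rw [h4]
  linarith [le_refl (μ ^ (3 + 2 * σ0) / 16)]
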